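/- Let Ω be a countably infinite set and let u, v, f ∈ Ω^Ω. If k(u) = k(f) = ∞, d(f) > 0, d(u) > 0, c(v) = ∞, and 0 < d(v) < ∞, then f belongs to the subsemigroup of Ω^Ω generated by S_{1,2,3,4,5} ∪ {u, v}. -/

import Mathlib

/-!
Setting: `Ω` is a countably infinite set, `Function.End Ω = Ω → Ω` is the full
transformation semigroup (a subset is closed under composition in one order iff
it is closed in the other, so the lattice of subsemigroups is unaffected by the
left-to-right convention of the paper).
-/

open Cardinal

/-- A transversal of `f`: a set on which `f` is injective and whose image is all of `Ωf`. -/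
def IsTransversal {Ω : Type*} (f : Ω → Ω) (T : Set Ω) : Prop :=
  Set.InjOn f T ∧ f '' T = Set.range f

/-- The defect `d(f) = |Ω \ Ωf|`. -/
noncomputable def defect {Ω : Type*} (f : Ω → Ω) : Cardinal :=
  #((Set.range f)ᶜ : Set Ω)

/-- The collapse `c(f) = |Ω \ Σ|` for a transversal `Σ` of `f` (the value is
independent of the choice of transversal, so the infimum is the common value). -/
noncomputable def collapse {Ω : Type*} (f : Ω → Ω) : Cardinal :=
  ⨅ T : {T : Set Ω // IsTransversal f T}, #(T.1ᶜ : Set Ω)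

/-- The infinite contraction index `k(f) = |{α : αf⁻¹ infinite}|`. -/
noncomputable def contract {Ω : Type*} (f : Ω → Ω) : Cardinal :=
  #({α : Ω | (f ⁻¹' {α}).Infinite} : Set Ω)

def S1 {Ω : Type*} : Set (Function.End Ω) := {f | collapse f = 0 ∨ 0 < defect f}
def S2 {Ω : Type*} : Set (Function.End Ω) := {f | 0 < collapse f ∨ defect f = 0}
def S3 {Ω : Type*} : Set (Function.End Ω) := {f | collapse f < ℵ₀ ∨ ℵ₀ ≤ defect f}
def S4 {Ω : Type*} : Set (Function.End Ω) := {f | ℵ₀ ≤ collapse f ∨ defect f < ℵ₀}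
def S5 {Ω : Type*} : Set (Function.End Ω) := {f | contract f < ℵ₀}

/-- `Sym(Ω)`, the bijections of `Ω`. -/
def SymOmega {Ω : Type*} : Set (Function.End Ω) := {f | Function.Bijective f}

/-- `U = {f : d(f) = ∞ or 0 < c(f) < ∞} ∪ Sym(Ω)`. -/
def SetU {Ω : Type*} : Set (Function.End Ω) :=
  {f | ℵ₀ ≤ defect f ∨ (0 < collapse f ∧ collapse f < ℵ₀)} ∪ SymOmega

/-- `V = {f : c(f) = ∞ or 0 < d(f) < ∞} ∪ Sym(Ω)`. -/
def SetV {Ω : Type*} : Set (Function.End Ω) :=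
  {f | ℵ₀ ≤ collapse f ∨ (0 < defect f ∧ defect f < ℵ₀)} ∪ SymOmega

/-- `S_{1,2,3,4,5}`. -/
def S12345 {Ω : Type*} : Set (Function.End Ω) := S1 ∩ S2 ∩ S3 ∩ S4 ∩ S5

/-- The family `S_1, …, S_5` indexed by `Fin 5`. -/
def SS {Ω : Type*} : Fin 5 → Set (Function.End Ω) := ![S1, S2, S3, S4, S5]

/-!
If `k(F) > 0` and `d(F) = ∞`, then `F = g₁ ∘ u ∘ g₂` with `g₁` a bijection and `g₂` sending
each fibre of `F` into an infinite fibre of `u`, with finite fibres, infinite collapse (it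
merges consecutive pairs of points of one infinite fibre of `F`) and infinite defect (it misses
infinitely many infinite fibres of `u`). If `0 < d(f) < ∞`, then `f = q ∘ v ∘ F`: `F` sends
`Ωf` bijectively, through `Ωv`, onto a transversal of `v`, which has infinite complement since
`c(v) = ∞`, so `d(F) = ∞`; and `q` inverts `v ∘ F` on `Ωv` and is constant off `Ωv`, so that
`c(q) = d(v)` and `d(q) = d(f)` are finite and positive.
-/

open Set Function

variable {Ω : Type*}

section Invariants

lemma defect_pos_iff {g : Ω → Ω} : 0 < defect g ↔ (range g)ᶜ.Nonempty := by
  rw [defect, pos_iff_ne_zero, Cardinal.mk_ne_zero_iff, nonempty_coe_sort]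

lemma aleph0_le_defect_iff {g : Ω → Ω} : ℵ₀ ≤ defect g ↔ (range g)ᶜ.Infinite := by
  rw [defect, Cardinal.aleph0_le_mk_iff, infinite_coe_iff]

lemma defect_lt_aleph0_iff {g : Ω → Ω} : defect g < ℵ₀ ↔ (range g)ᶜ.Finite :=
  Cardinal.lt_aleph0_iff_set_finite

lemma contract_eq_zero_iff {g : Ω → Ω} : contract g = 0 ↔ ∀ α, (g ⁻¹' {α}).Finite := by
  simp [contract, Cardinal.mk_eq_zero_iff, isEmpty_coe_sort, eq_empty_iff_forall_notMem]

lemma contract_pos_iff {g : Ω → Ω} : 0 < contract g ↔ ∃ α, (g ⁻¹' {α}).Infinite := by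
  simp [pos_iff_ne_zero, contract_eq_zero_iff]

lemma aleph0_le_contract_iff {g : Ω → Ω} :
    ℵ₀ ≤ contract g ↔ {α | (g ⁻¹' {α}).Infinite}.Infinite := by
  rw [contract, Cardinal.aleph0_le_mk_iff, infinite_coe_iff]

lemma infinite_of_contract_pos {g : Ω → Ω} (h : 0 < contract g) : Infinite Ω := by
  obtain ⟨α, hα⟩ := contract_pos_iff.1 h
  exact infinite_univ_iff.1 (hα.mono (subset_univ _))

lemma contract_pos_of_factorsThrough {f F : Ω → Ω} (hF : F.FactorsThrough f)
    (hf : 0 < contract f) : 0 < contract F := by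
  obtain ⟨α, hα⟩ := contract_pos_iff.1 hf
  obtain ⟨x, rfl⟩ := hα.nonempty
  exact contract_pos_iff.2 ⟨F x, hα.mono fun y hy => hF hy⟩

lemma collapse_le_of_isTransversal {g : Ω → Ω} {T : Set Ω} (hT : IsTransversal g T) :
    collapse g ≤ #(Tᶜ : Set Ω) :=
  ciInf_le' _ (⟨T, hT⟩ : {T : Set Ω // IsTransversal g T})

lemma isTransversal_image_invFun [Nonempty Ω] (g : Ω → Ω) :
    IsTransversal g (invFun g '' range g) := by
  have hg : ∀ β ∈ range g, g (invFun g β) = β := fun β hβ => invFun_eq hβ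
  refine ⟨?_, ?_⟩
  · rintro _ ⟨β, hβ, rfl⟩ _ ⟨γ, hγ, rfl⟩ h
    rw [hg β hβ, hg γ hγ] at h
    rw [h]
  · rw [image_image]
    exact (image_congr hg).trans (image_id' _)

lemma le_collapse [Nonempty Ω] {g : Ω → Ω} {a : Cardinal}
    (h : ∀ T : Set Ω, IsTransversal g T → a ≤ #(Tᶜ : Set Ω)) : a ≤ collapse g :=
  have : Nonempty {T : Set Ω // IsTransversal g T} := ⟨⟨_, isTransversal_image_invFun g⟩⟩
  le_ciInf fun T => h T.1 T.2

lemma collapse_eq_zero_of_injective {g : Ω → Ω} (hg : Injective g) : collapse g = 0 := by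
  simpa using collapse_le_of_isTransversal (T := univ) ⟨hg.injOn, image_univ⟩

lemma collapse_pos_of_ne {g : Ω → Ω} {x y : Ω} (hxy : x ≠ y) (hg : g x = g y) :
    0 < collapse g := by
  have : Nonempty Ω := ⟨x⟩
  refine zero_lt_one.trans_le (le_collapse fun T hT => ?_)
  rw [Cardinal.one_le_iff_ne_zero, Cardinal.mk_ne_zero_iff, nonempty_coe_sort,
    nonempty_iff_ne_empty, Ne, compl_empty_iff]
  rintro rfl
  exact hxy (hT.1 (mem_univ x) (mem_univ y) hg)

/-- Every transversal misses one of `x n`, `y n` for each `n`, so it misses infinitely many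
points. -/
lemma aleph0_le_collapse_of_pairs {g : Ω → Ω} {x y : ℕ → Ω} (hx : Injective x)
    (hy : Injective y) (hxy : ∀ n, x n ≠ y n) (hg : ∀ n, g (x n) = g (y n)) :
    ℵ₀ ≤ collapse g := by
  have : Nonempty Ω := ⟨x 0⟩
  refine le_collapse fun T hT => Cardinal.aleph0_le_mk_iff.2 (Infinite.to_subtype fun hfin => ?_)
  have hcover : (univ : Set ℕ) ⊆ x ⁻¹' Tᶜ ∪ y ⁻¹' Tᶜ := by
    intro n _
    by_contra h
    simp only [mem_union, mem_preimage, mem_compl_iff, not_or, not_not] at h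
    exact hxy n (hT.1 h.1 h.2 (hg n))
  exact infinite_univ (((hfin.preimage hx.injOn).union (hfin.preimage hy.injOn)).subset hcover)

lemma contract_eq_zero_of_isTransversal {g : Ω → Ω} {T : Set Ω} (hT : IsTransversal g T)
    (hTc : Tᶜ.Finite) : contract g = 0 := by
  refine contract_eq_zero_iff.2 fun α => ?_
  have hfib : (T ∩ g ⁻¹' {α}).Finite :=
    ((finite_singleton α).subset (image_subset_iff.2 inter_subset_right)).of_finite_image
      (hT.1.mono inter_subset_left)
  refine (hTc.union hfib).subset fun x hx => ?_
  by_cases hxT : x ∈ T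
  exacts [Or.inr ⟨hxT, hx⟩, Or.inl hxT]

end Invariants

section Membership

lemma mem_S12345_of_bijective {g : Function.End Ω} (hg : Bijective g) : g ∈ S12345 := by
  have hc : collapse g = 0 := collapse_eq_zero_of_injective hg.1
  have hd : defect g = 0 := by simp [defect, hg.2.range_eq]
  have hk : contract g = 0 :=
    contract_eq_zero_iff.2 fun α => (subsingleton_singleton.preimage hg.1).finite
  exact ⟨⟨⟨⟨Or.inl hc, Or.inr hd⟩, Or.inl (hc.trans_lt Cardinal.aleph0_pos)⟩,
    Or.inr (hd.trans_lt Cardinal.aleph0_pos)⟩, hk.trans_lt Cardinal.aleph0_pos⟩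

lemma mem_S12345_of_aleph0_le {g : Function.End Ω} (hc : ℵ₀ ≤ collapse g)
    (hd : ℵ₀ ≤ defect g) (hk : contract g < ℵ₀) : g ∈ S12345 :=
  ⟨⟨⟨⟨Or.inr (Cardinal.aleph0_pos.trans_le hd), Or.inl (Cardinal.aleph0_pos.trans_le hc)⟩,
    Or.inr hd⟩, Or.inl hc⟩, hk⟩

lemma mem_S12345_of_pos_of_lt_aleph0 {g : Function.End Ω} (hc₀ : 0 < collapse g)
    (hc : collapse g < ℵ₀) (hd₀ : 0 < defect g) (hd : defect g < ℵ₀) (hk : contract g < ℵ₀) :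
    g ∈ S12345 :=
  ⟨⟨⟨⟨Or.inr hd₀, Or.inl hc₀⟩, Or.inl hc⟩, Or.inr hd⟩, hk⟩

end Membership

section Factorization

lemma Set.Infinite.exists_injective_nat_mem {A : Set Ω} (hA : A.Infinite) :
    ∃ φ : ℕ → Ω, Injective φ ∧ ∀ n, φ n ∈ A :=
  ⟨fun n => hA.natEmbedding _ n, Subtype.val_injective.comp (hA.natEmbedding _).injective,
    fun n => (hA.natEmbedding _ n).2⟩

lemma exists_injective_range_subset_infinite_diff [Countable Ω] {A : Set Ω} (hA : A.Infinite) :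
    ∃ c : Ω → Ω, Injective c ∧ range c ⊆ A ∧ (A \ range c).Infinite := by
  obtain ⟨enc, henc⟩ := Countable.exists_injective_nat Ω
  obtain ⟨φ, hφ, hφA⟩ := hA.exists_injective_nat_mem
  refine ⟨fun α => φ (2 * enc α), fun a b h => henc (by have := hφ h; omega),
    fun _ ⟨α, hα⟩ => hα ▸ hφA _, ?_⟩
  have hodd : Injective fun n => φ (2 * n + 1) := fun a b h => by have := hφ h; omega
  refine (infinite_range_of_injective hodd).mono ?_
  rintro _ ⟨n, rfl⟩
  exact ⟨hφA _, fun ⟨α, hα⟩ => by have := hφ hα; omega⟩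

/-- `w` is `n ↦ n / 2` along `p` and injective off the range of `p`. -/
lemma exists_finite_fibres_eq_on_pairs [Countable Ω] {p : ℕ → Ω} (hp : Injective p) :
    ∃ w : Ω → ℕ, (∀ n, (w ⁻¹' {n}).Finite) ∧
      ∀ n, w (p (2 * n)) = n ∧ w (p (2 * n + 1)) = n := by
  obtain ⟨enc, henc⟩ := Countable.exists_injective_nat Ω
  refine ⟨extend p (· / 2) enc, fun n => ?_, fun n => by simp [hp.extend_apply]; omega⟩
  refine (((finite_singleton n).preimage henc.injOn).insert (p (2 * n)) |>.insert
    (p (2 * n + 1))).subset fun x hx => ?_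
  by_cases hx' : ∃ k, p k = x
  · obtain ⟨k, rfl⟩ := hx'
    have : k / 2 = n := by simpa [hp.extend_apply] using hx
    have : k = 2 * n ∨ k = 2 * n + 1 := by omega
    rcases this with rfl | rfl <;> simp
  · simp only [mem_preimage, mem_singleton_iff, extend_apply' _ _ _ hx'] at hx
    simp [hx]

lemma exists_lift_aleph0_le_collapse [Countable Ω] {u F c : Ω → Ω} (hc : Injective c)
    (hu : ∀ α, (u ⁻¹' {c α}).Infinite) (hF : 0 < contract F) :
    ∃ g : Ω → Ω, (∀ x, u (g x) = c (F x)) ∧ ℵ₀ ≤ collapse g ∧ contract g = 0 := by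
  obtain ⟨α₀, hα₀⟩ := contract_pos_iff.1 hF
  obtain ⟨p, hp, hFp⟩ := hα₀.exists_injective_nat_mem
  obtain ⟨w, hw, hwp⟩ := exists_finite_fibres_eq_on_pairs hp
  choose m hm hum using fun α => (hu α).exists_injective_nat_mem
  let g : Ω → Ω := fun x => m (F x) (w x)
  have hg : ∀ x y, g x = g y → w x = w y := fun x y h => by
    have hFxy : F x = F y := hc ((hum (F x) (w x)).symm.trans ((congrArg u h).trans (hum _ _)))
    simp only [g, hFxy] at h
    exact hm (F y) h
  refine ⟨g, fun x => hum _ _, ?_, contract_eq_zero_iff.2 fun z => ?_⟩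
  · refine aleph0_le_collapse_of_pairs (x := fun n => p (2 * n)) (y := fun n => p (2 * n + 1))
      (hp.comp fun a b h => by omega) (hp.comp fun a b h => by omega)
      (fun n h => by have := hp h; omega) fun n => ?_
    simp only [g, show F (p _) = α₀ from hFp _, (hwp n).1, (hwp n).2]
  · rcases (g ⁻¹' {z}).eq_empty_or_nonempty with h | ⟨x, hx⟩
    · exact h ▸ finite_empty
    · exact (hw (w x)).subset fun y hy => hg y x (hy.trans hx.symm)

lemma exists_equiv_eqOn {α β : Type*} [Countable α] [Countable β] {s : Set α} {c : α → β}
    (hc : InjOn c s) (hs : sᶜ.Infinite) (hcs : (c '' s)ᶜ.Infinite) :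
    ∃ π : α ≃ β, EqOn π c s := by
  let e : s ↪ β := ⟨s.domRestrict c, hc.injective⟩
  have : Infinite (sᶜ : Set α) := hs.to_subtype
  have : Infinite ((range e)ᶜ : Set β) := by
    rw [show range e = c '' s from range_domRestrict c s]
    exact hcs.to_subtype
  obtain ⟨π, hπ⟩ := Cardinal.extend_function e nonempty_equiv_of_countable
  exact ⟨π, fun x hx => hπ ⟨x, hx⟩⟩

theorem exists_mul_mul_eq_of_aleph0_le_defect [Countable Ω] {u F : Function.End Ω}
    (hu : ℵ₀ ≤ contract u) (hF : 0 < contract F) (hdF : ℵ₀ ≤ defect F) :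
    ∃ g₁ ∈ S12345, ∃ g₂ ∈ S12345, F = g₁ * u * g₂ := by
  obtain ⟨c, hc, hcA, hAc⟩ :=
    exists_injective_range_subset_infinite_diff (aleph0_le_contract_iff.1 hu)
  obtain ⟨g₂, hug₂, hcol, hk⟩ := exists_lift_aleph0_le_collapse hc (fun α => hcA ⟨α, rfl⟩) hF
  obtain ⟨β, hβ, hβc⟩ := hAc.nonempty
  have hd : ℵ₀ ≤ defect g₂ := by
    refine aleph0_le_defect_iff.2 ((hβ : (u ⁻¹' {β}).Infinite).mono ?_)
    rintro _ hx ⟨x, rfl⟩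
    exact hβc ⟨F x, (hug₂ x).symm.trans hx⟩
  obtain ⟨π, hπ⟩ := exists_equiv_eqOn hc.injOn (aleph0_le_defect_iff.1 hdF)
    (hAc.mono fun _ hb hb' => hb.2 (image_subset_range _ _ hb'))
  refine ⟨⇑π.symm, mem_S12345_of_bijective π.symm.bijective, g₂,
    mem_S12345_of_aleph0_le hcol hd (hk.trans_lt Cardinal.aleph0_pos), funext fun x => ?_⟩
  show F x = π.symm (u (g₂ x))
  rw [hug₂ x, ← hπ (mem_range_self x), Equiv.symm_apply_apply]

/-- `q` extends `e` by a constant: `s` is a transversal of `q`, so `c(q) = |Ω \ s|` and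
`d(q) = |Ω \ t|`. -/
lemma exists_mem_S12345_extending_equiv [Infinite Ω] {s t : Set Ω} (e : s ≃ t)
    (hs : sᶜ.Finite) (hs₀ : sᶜ.Nonempty) (ht : tᶜ.Finite) (ht₀ : tᶜ.Nonempty) :
    ∃ q ∈ S12345, ∀ y : s, q (y : Ω) = e y := by
  classical
  obtain ⟨y₀⟩ : Nonempty s := (infinite_of_finite_compl hs).nonempty.to_subtype
  let q : Function.End Ω := fun z => if h : z ∈ s then (e ⟨z, h⟩ : Ω) else e y₀
  have hq : ∀ y : s, q y = e y := fun y => dif_pos y.2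
  have hq' : ∀ z ∉ s, q z = e y₀ := fun z hz => dif_neg hz
  have himage : q '' s = t := by
    refine subset_antisymm ?_ fun b hb => ⟨e.symm ⟨b, hb⟩, (e.symm _).2, ?_⟩
    · rintro _ ⟨y, hy, rfl⟩
      exact hq ⟨y, hy⟩ ▸ (e _).2
    · rw [hq, Equiv.apply_symm_apply]
  have hrange : range q = t := by
    refine subset_antisymm ?_ (himage ▸ image_subset_range q s)
    rintro _ ⟨z, rfl⟩
    by_cases hz : z ∈ s
    exacts [hq ⟨z, hz⟩ ▸ (e _).2, hq' z hz ▸ (e y₀).2]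
  have hT : IsTransversal q s := by
    refine ⟨fun a ha b hb h => ?_, himage.trans hrange.symm⟩
    have := e.injective (Subtype.ext ((hq ⟨a, ha⟩).symm.trans (h.trans (hq ⟨b, hb⟩))))
    exact congrArg Subtype.val this
  obtain ⟨z₀, hz₀⟩ := hs₀
  have hc₀ : 0 < collapse q :=
    collapse_pos_of_ne (x := z₀) (y := y₀) (fun h => hz₀ (h ▸ y₀.2))
      ((hq' z₀ hz₀).trans (hq y₀).symm)
  refine ⟨q, mem_S12345_of_pos_of_lt_aleph0 hc₀
    ((collapse_le_of_isTransversal hT).trans_lt (Cardinal.lt_aleph0_iff_set_finite.2 hs))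
    (defect_pos_iff.2 (hrange ▸ ht₀)) (defect_lt_aleph0_iff.2 (hrange ▸ ht))
    ((contract_eq_zero_of_isTransversal hT hs).trans_lt Cardinal.aleph0_pos), hq⟩

theorem exists_mul_mul_eq_of_defect_lt_aleph0 [Countable Ω] {v f : Function.End Ω}
    (hcv : ℵ₀ ≤ collapse v) (hdv : 0 < defect v) (hdv' : defect v < ℵ₀) (hkf : 0 < contract f)
    (hdf : 0 < defect f) (hdf' : defect f < ℵ₀) :
    ∃ q ∈ S12345, ∃ F : Function.End Ω, 0 < contract F ∧ ℵ₀ ≤ defect F ∧ f = q * v * F := by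
  have : Infinite Ω := infinite_of_contract_pos hkf
  have : Infinite (range v) := (infinite_of_finite_compl (defect_lt_aleph0_iff.1 hdv')).to_subtype
  have : Infinite (range f) := (infinite_of_finite_compl (defect_lt_aleph0_iff.1 hdf')).to_subtype
  obtain ⟨e⟩ : Nonempty (range v ≃ range f) := nonempty_equiv_of_countable
  obtain ⟨q, hq, hqe⟩ := exists_mem_S12345_extending_equiv e (defect_lt_aleph0_iff.1 hdv')
    (defect_pos_iff.1 hdv) (defect_lt_aleph0_iff.1 hdf') (defect_pos_iff.1 hdf)
  let F : Function.End Ω := fun x => invFun v (e.symm (rangeFactorization f x))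
  have hvF : ∀ x, v (F x) = e.symm (rangeFactorization f x) := fun x => invFun_eq (e.symm _).2
  have hdF : ℵ₀ ≤ defect F := by
    refine hcv.trans ((collapse_le_of_isTransversal (isTransversal_image_invFun v)).trans
      (Cardinal.mk_le_mk_of_subset (compl_subset_compl.2 ?_)))
    rintro _ ⟨x, rfl⟩
    exact mem_image_of_mem _ (e.symm _).2
  refine ⟨q, hq, F, contract_pos_of_factorsThrough (fun x y h => ?_) hkf, hdF, funext fun x => ?_⟩
  · simp only [F, show rangeFactorization f x = rangeFactorization f y from Subtype.ext h]
  · show f x = q (v (F x))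
    rw [hvF, hqe, Equiv.apply_symm_apply]
    rfl

end Factorization

theorem stmt12_general (Ω : Type) [Countable Ω] (u v f : Function.End Ω)
    (hku : ℵ₀ ≤ contract u) (hkf : ℵ₀ ≤ contract f)
    (hdf : 0 < defect f)
    (hcv : ℵ₀ ≤ collapse v) (hdv : 0 < defect v) (hdv' : defect v < ℵ₀) :
    f ∈ Subsemigroup.closure (S12345 ∪ {u, v}) := by
  have hkf₀ : 0 < contract f := Cardinal.aleph0_pos.trans_le hkf
  have mem : ∀ g ∈ S12345 ∪ {u, v}, g ∈ Subsemigroup.closure (S12345 ∪ {u, v}) :=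
    fun _ hg => Subsemigroup.subset_closure hg
  have hmem_of_infinite_defect : ∀ F, 0 < contract F → ℵ₀ ≤ defect F →
      F ∈ Subsemigroup.closure (S12345 ∪ {u, v}) := by
    intro F hF hdF
    obtain ⟨g₁, hg₁, g₂, hg₂, rfl⟩ := exists_mul_mul_eq_of_aleph0_le_defect hku hF hdF
    exact mul_mem (mul_mem (mem _ (.inl hg₁)) (mem u (by simp))) (mem _ (.inl hg₂))
  rcases le_or_gt ℵ₀ (defect f) with hdf' | hdf'
  · exact hmem_of_infinite_defect f hkf₀ hdf'
  · obtain ⟨q, hq, F, hF, hdF, rfl⟩ :=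
      exists_mul_mul_eq_of_defect_lt_aleph0 hcv hdv hdv' hkf₀ hdf hdf'
    exact mul_mem (mul_mem (mem q (.inl hq)) (mem v (by simp))) (hmem_of_infinite_defect F hF hdF)

theorem stmt12 (Ω : Type) [Countable Ω] [Infinite Ω] (u v f : Function.End Ω)
    (hku : ℵ₀ ≤ contract u) (hkf : ℵ₀ ≤ contract f)
    (hdf : 0 < defect f) (hdu : 0 < defect u)
    (hcv : ℵ₀ ≤ collapse v) (hdv : 0 < defect v) (hdv' : defect v < ℵ₀) :
    f ∈ Subsemigroup.closure (S12345 ∪ {u, v}) :=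
  stmt12_general Ω u v f hku hkf hdf hcv hdv hdv'
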